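/- Every maximal subgroup of H_{p,t,s} is abelian; that is, H_{p,t,s} is an inner-abelian group. -/

import Mathlib

/-!
When `c = ⁅a, b⁆` commutes with `a` and `b`, the map `⟨x, y, z⟩ ↦ b ^ y * a ^ x * c ^ z` is a
homomorphism from the integer Heisenberg group onto `⟨a, b, c⟩`; there `⁅g, h⁆ = c ^ n`, where `n`
is the determinant of the `(x, y)`-coordinates of `g` and `h`. If `g, h ∈ K` do not commute, then
`p ∤ n` because `c ^ p = 1`, so `c ∈ K`; suitable products of powers of `g` and `h` are `a ^ n` and
`b ^ n` up to powers of `c`, and since `a`, `b` have `p`-power order, `a, b ∈ K`, i.e. `K = ⊤`.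
The group is not abelian since it maps onto the Heisenberg group over `ZMod p`.
-/

open scoped commutatorElement

/-- Relations for the inner-abelian non-metacyclic p-group
`H_{p,t,s} = ⟨a, b, c | a^(p^t) = b^(p^s) = c^p = 1, [a,b] = c, [c,a] = [c,b] = 1⟩`. -/
def HRels (p t s : ℕ) : Set (FreeGroup (Fin 3)) :=
  {FreeGroup.of (0 : Fin 3) ^ p ^ t, FreeGroup.of (1 : Fin 3) ^ p ^ s, FreeGroup.of (2 : Fin 3) ^ p,
   ⁅FreeGroup.of (0 : Fin 3), FreeGroup.of (1 : Fin 3)⁆ * (FreeGroup.of (2 : Fin 3))⁻¹,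
   ⁅FreeGroup.of (2 : Fin 3), FreeGroup.of (0 : Fin 3)⁆, ⁅FreeGroup.of (2 : Fin 3), FreeGroup.of (1 : Fin 3)⁆}

/-- The group `H_{p,t,s}` as a presented group. -/
abbrev Hgrp (p t s : ℕ) := PresentedGroup (HRels p t s)

/-- The generator `a` of `H_{p,t,s}`. -/
def aa (p t s : ℕ) : Hgrp p t s := PresentedGroup.of (0 : Fin 3)

/-- The generator `b` of `H_{p,t,s}`. -/
def bb (p t s : ℕ) : Hgrp p t s := PresentedGroup.of (1 : Fin 3)

/-- The generator `c = [a,b]` of `H_{p,t,s}`. -/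
def cc (p t s : ℕ) : Hgrp p t s := PresentedGroup.of (2 : Fin 3)

-- `⟨x, y, z⟩` is the unitriangular matrix `!![1, x, z; 0, 1, y; 0, 0, 1]`.
@[ext]
structure Heisenberg (R : Type*) where
  x : R
  y : R
  z : R

namespace Heisenberg

variable {R : Type*} [CommRing R]

instance : Mul (Heisenberg R) := ⟨fun u v => ⟨u.x + v.x, u.y + v.y, u.z + v.z + u.x * v.y⟩⟩
instance : One (Heisenberg R) := ⟨⟨0, 0, 0⟩⟩
instance : Inv (Heisenberg R) := ⟨fun u => ⟨-u.x, -u.y, -u.z + u.x * u.y⟩⟩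

@[simp] lemma mul_x (u v : Heisenberg R) : (u * v).x = u.x + v.x := rfl
@[simp] lemma mul_y (u v : Heisenberg R) : (u * v).y = u.y + v.y := rfl
@[simp] lemma mul_z (u v : Heisenberg R) : (u * v).z = u.z + v.z + u.x * v.y := rfl
@[simp] lemma one_x : (1 : Heisenberg R).x = 0 := rfl
@[simp] lemma one_y : (1 : Heisenberg R).y = 0 := rfl
@[simp] lemma one_z : (1 : Heisenberg R).z = 0 := rfl
@[simp] lemma inv_x (u : Heisenberg R) : u⁻¹.x = -u.x := rfl
@[simp] lemma inv_y (u : Heisenberg R) : u⁻¹.y = -u.y := rfl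
@[simp] lemma inv_z (u : Heisenberg R) : u⁻¹.z = -u.z + u.x * u.y := rfl

instance : Group (Heisenberg R) where
  mul_assoc u v w := by ext <;> simp only [mul_x, mul_y, mul_z] <;> ring
  one_mul u := by ext <;> simp
  mul_one u := by ext <;> simp
  inv_mul_cancel u := by ext <;> simp

def toProd : Heisenberg R →* Multiplicative (R × R) where
  toFun u := .ofAdd (u.x, u.y)
  map_one' := rfl
  map_mul' _ _ := rfl

@[simp] lemma zpow_x (u : Heisenberg R) (n : ℤ) : (u ^ n).x = n * u.x := by
  change (toProd (u ^ n)).toAdd.1 = _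
  rw [map_zpow, toAdd_zpow, Prod.smul_fst, zsmul_eq_mul]
  rfl

@[simp] lemma zpow_y (u : Heisenberg R) (n : ℤ) : (u ^ n).y = n * u.y := by
  change (toProd (u ^ n)).toAdd.2 = _
  rw [map_zpow, toAdd_zpow, Prod.smul_snd, zsmul_eq_mul]
  rfl

lemma pow_eq (u : Heisenberg R) (n : ℕ) :
    u ^ n = ⟨n * u.x, n * u.y, n * u.z + n.choose 2 * (u.x * u.y)⟩ := by
  induction n with
  | zero => ext <;> simp
  | succ n ih =>
    rw [pow_succ, ih]
    ext <;> simp [Nat.choose_succ_succ' n 1] <;> ring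

lemma commutatorElement_eq (u v : Heisenberg R) :
    ⁅u, v⁆ = ⟨0, 0, u.x * v.y - v.x * u.y⟩ := by
  ext <;> simp [commutatorElement_def]
  ring

lemma not_commute [Nontrivial R] : ¬ Commute (⟨1, 0, 0⟩ : Heisenberg R) ⟨0, 1, 0⟩ := by
  rw [← commutatorElement_eq_one_iff_commute, commutatorElement_eq]
  intro h
  simpa using congrArg z h

lemma mk_mem_of_mem {L : Subgroup (Heisenberg R)} (hL : ∀ k : R, ⟨0, 0, k⟩ ∈ L)
    {u : Heisenberg R} (hu : u ∈ L) (k : R) : ⟨u.x, u.y, k⟩ ∈ L := by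
  convert L.mul_mem hu (hL (k - u.z)) using 1
  ext <;> simp

lemma mk_det_mem {L : Subgroup (Heisenberg ℤ)} (hL : ∀ k : ℤ, ⟨0, 0, k⟩ ∈ L)
    {u v : Heisenberg ℤ} (hu : u ∈ L) (hv : v ∈ L) :
    ⟨u.x * v.y - v.x * u.y, 0, 0⟩ ∈ L ∧ ⟨0, u.x * v.y - v.x * u.y, 0⟩ ∈ L := by
  constructor
  · convert mk_mem_of_mem hL (L.mul_mem (L.zpow_mem hu v.y) (L.zpow_mem hv (-u.y))) 0 using 2
      <;> simp <;> ring
  · convert mk_mem_of_mem hL (L.mul_mem (L.zpow_mem hv u.x) (L.zpow_mem hu (-v.x))) 0 using 2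
      <;> simp <;> ring

end Heisenberg

lemma Subgroup.mem_of_zpow_mem {G : Type*} [Group G] {K : Subgroup G} {g : G} {p t : ℕ}
    (hp : p.Prime) (hg : g ^ p ^ t = 1) {n : ℤ} (hn : ¬ (p : ℤ) ∣ n) (h : g ^ n ∈ K) : g ∈ K := by
  have hcop : n.natAbs.Coprime (orderOf g) :=
    (Nat.Coprime.pow_right t ((hp.coprime_iff_not_dvd.mpr (Int.natCast_dvd.not.mp hn)).symm))
      |>.coprime_dvd_right (orderOf_dvd_of_pow_eq_one hg)
  exact Subgroup.zpowers_le.mpr h (mem_zpowers_zpow_iff.mpr hcop)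

section CentralCommutator

variable {G : Type*} [Group G] {a b c : G}

lemma pow_mul_zpow_eq_of_commutatorElement_eq (hab : ⁅a, b⁆ = c) (hca : Commute c a)
    (hcb : Commute c b) (n : ℕ) (y : ℤ) : a ^ n * b ^ y = c ^ (n * y) * b ^ y * a ^ n := by
  have hconj : a * b ^ y = c ^ y * b ^ y * a := by
    rw [← hcb.mul_zpow, show c * b = a * b * a⁻¹ by rw [← hab]; group, conj_zpow]
    group
  induction n with
  | zero => simp
  | succ n ih =>
    calc a ^ (n + 1) * b ^ y = a * (a ^ n * b ^ y) := by group
      _ = a * c ^ (n * y) * b ^ y * a ^ n := by rw [ih]; group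
      _ = c ^ (n * y) * (a * b ^ y) * a ^ n := by rw [← (hca.zpow_left _).eq]; group
      _ = c ^ ((n + 1 : ℕ) * y) * b ^ y * a ^ (n + 1) := by rw [hconj]; push_cast; group

lemma zpow_mul_zpow_eq_of_commutatorElement_eq (hab : ⁅a, b⁆ = c) (hca : Commute c a)
    (hcb : Commute c b) (x y : ℤ) : a ^ x * b ^ y = c ^ (x * y) * b ^ y * a ^ x := by
  obtain ⟨n, rfl | rfl⟩ := Int.eq_nat_or_neg x
  · exact_mod_cast pow_mul_zpow_eq_of_commutatorElement_eq hab hca hcb n y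
  · have hab' : ⁅a⁻¹, b⁆ = c⁻¹ := by
      rw [commutatorElement_inv_left, ← commutatorElement_inv, hab, ← hca.inv_inv.eq]
      group
    simpa [zpow_neg, neg_mul, inv_zpow] using
      pow_mul_zpow_eq_of_commutatorElement_eq hab' hca.inv_inv hcb.inv_left n y

namespace Heisenberg

-- `b` comes before `a` so that `a ^ x * b ^ y = c ^ (x * y) * b ^ y * a ^ x` produces the `u.x * v.y`
-- in the `z`-coordinate of a product.
def lift (hab : ⁅a, b⁆ = c) (hca : Commute c a) (hcb : Commute c b) : Heisenberg ℤ →* G where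
  toFun u := b ^ u.y * a ^ u.x * c ^ u.z
  map_one' := by simp
  map_mul' u v := by
    have hc : ∀ k x y : ℤ, Commute (c ^ k) (b ^ y * a ^ x) := fun k x y =>
      (hcb.zpow_zpow k y).mul_right (hca.zpow_zpow k x)
    symm
    calc b ^ u.y * a ^ u.x * c ^ u.z * (b ^ v.y * a ^ v.x * c ^ v.z)
        = b ^ u.y * a ^ u.x * (c ^ u.z * (b ^ v.y * a ^ v.x)) * c ^ v.z := by group
      _ = b ^ u.y * a ^ u.x * (b ^ v.y * a ^ v.x * c ^ u.z) * c ^ v.z := by rw [(hc _ _ _).eq]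
      _ = b ^ u.y * (a ^ u.x * b ^ v.y) * a ^ v.x * (c ^ u.z * c ^ v.z) := by group
      _ = b ^ u.y * (c ^ (u.x * v.y) * b ^ v.y * a ^ u.x) * a ^ v.x * (c ^ u.z * c ^ v.z) := by
        rw [zpow_mul_zpow_eq_of_commutatorElement_eq hab hca hcb]
      _ = b ^ u.y * c ^ (u.x * v.y) * (b ^ v.y * a ^ u.x * a ^ v.x * c ^ u.z * c ^ v.z) := by
        group
      _ = c ^ (u.x * v.y) * b ^ u.y * (b ^ v.y * a ^ u.x * a ^ v.x * c ^ u.z * c ^ v.z) := by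
        rw [(hcb.zpow_zpow _ _).eq]
      _ = c ^ (u.x * v.y) * (b ^ (u.y + v.y) * a ^ (u.x + v.x)) * c ^ (u.z + v.z) := by group
      _ = b ^ (u.y + v.y) * a ^ (u.x + v.x) * c ^ (u.x * v.y) * c ^ (u.z + v.z) := by
        rw [(hc _ _ _).eq]
      _ = b ^ (u * v).y * a ^ (u * v).x * c ^ (u * v).z := by simp only [mul_x, mul_y, mul_z]; group

@[simp] lemma lift_apply (hab : ⁅a, b⁆ = c) (hca : Commute c a) (hcb : Commute c b)
    (u : Heisenberg ℤ) : lift hab hca hcb u = b ^ u.y * a ^ u.x * c ^ u.z :=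
  rfl

lemma range_lift (hab : ⁅a, b⁆ = c) (hca : Commute c a) (hcb : Commute c b)
    (hgen : Subgroup.closure {a, b, c} = ⊤) : (lift hab hca hcb).range = ⊤ := by
  rw [eq_top_iff, ← hgen, Subgroup.closure_le]
  simp only [Set.insert_subset_iff, Set.singleton_subset_iff, SetLike.mem_coe]
  exact ⟨⟨⟨1, 0, 0⟩, by simp⟩, ⟨⟨0, 1, 0⟩, by simp⟩, ⟨⟨0, 0, 1⟩, by simp⟩⟩

end Heisenberg

theorem Subgroup.eq_top_of_not_commute {p t s : ℕ} (hp : p.Prime) (hab : ⁅a, b⁆ = c)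
    (hca : Commute c a) (hcb : Commute c b) (ha : a ^ p ^ t = 1) (hb : b ^ p ^ s = 1)
    (hc : c ^ p = 1) (hgen : Subgroup.closure {a, b, c} = ⊤) {K : Subgroup G} {g h : G}
    (hg : g ∈ K) (hh : h ∈ K) (hgh : ¬ Commute g h) : K = ⊤ := by
  set φ := Heisenberg.lift hab hca hcb
  have hφ : φ.range = ⊤ := Heisenberg.range_lift hab hca hcb hgen
  obtain ⟨u, rfl⟩ := hφ ▸ Subgroup.mem_top g
  obtain ⟨v, rfl⟩ := hφ ▸ Subgroup.mem_top h
  set n := u.x * v.y - v.x * u.y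
  have hcomm : ⁅φ u, φ v⁆ = c ^ n := by
    rw [← map_commutatorElement, Heisenberg.commutatorElement_eq]
    simp [φ, n]
  have hn : ¬ (p : ℤ) ∣ n := by
    rintro ⟨m, hm⟩
    apply hgh
    rw [← commutatorElement_eq_one_iff_commute, hcomm, hm, zpow_mul, zpow_natCast, hc, one_zpow]
  have hcnK : c ^ n ∈ K := by
    rw [← hcomm, commutatorElement_def]
    exact K.mul_mem (K.mul_mem (K.mul_mem hg hh) (K.inv_mem hg)) (K.inv_mem hh)
  have hcK : c ∈ K := K.mem_of_zpow_mem hp (t := 1) (by rwa [pow_one]) hn hcnK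
  have hcenter : ∀ k : ℤ, (⟨0, 0, k⟩ : Heisenberg ℤ) ∈ K.comap φ := fun k => by
    simpa [φ] using K.zpow_mem hcK k
  obtain ⟨hx, hy⟩ := Heisenberg.mk_det_mem hcenter (K.mem_comap.mpr hg) (K.mem_comap.mpr hh)
  have haK : a ∈ K := K.mem_of_zpow_mem hp ha hn (by simpa [φ] using hx)
  have hbK : b ∈ K := K.mem_of_zpow_mem hp hb hn (by simpa [φ] using hy)
  rw [eq_top_iff, ← hgen, Subgroup.closure_le]
  simp only [Set.insert_subset_iff, Set.singleton_subset_iff, SetLike.mem_coe]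
  exact ⟨haK, hbK, hcK⟩

end CentralCommutator

namespace Hgrp

variable {p t s : ℕ}

lemma aa_pow : aa p t s ^ p ^ t = 1 := by
  simpa [aa, PresentedGroup.of] using PresentedGroup.one_of_mem (rels := HRels p t s)
    (x := FreeGroup.of 0 ^ p ^ t) (by simp [HRels])

lemma bb_pow : bb p t s ^ p ^ s = 1 := by
  simpa [bb, PresentedGroup.of] using PresentedGroup.one_of_mem (rels := HRels p t s)
    (x := FreeGroup.of 1 ^ p ^ s) (by simp [HRels])

lemma cc_pow : cc p t s ^ p = 1 := by
  simpa [cc, PresentedGroup.of] using PresentedGroup.one_of_mem (rels := HRels p t s)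
    (x := FreeGroup.of 2 ^ p) (by simp [HRels])

lemma commutatorElement_aa_bb : ⁅aa p t s, bb p t s⁆ = cc p t s := by
  have h := PresentedGroup.one_of_mem (rels := HRels p t s)
    (x := ⁅FreeGroup.of (0 : Fin 3), FreeGroup.of 1⁆ * (FreeGroup.of 2)⁻¹) (by simp [HRels])
  rw [map_mul, map_inv, map_commutatorElement, mul_inv_eq_one] at h
  exact h

lemma commute_cc_aa : Commute (cc p t s) (aa p t s) := by
  have h := PresentedGroup.one_of_mem (rels := HRels p t s)
    (x := ⁅FreeGroup.of (2 : Fin 3), FreeGroup.of 0⁆) (by simp [HRels])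
  rwa [map_commutatorElement, commutatorElement_eq_one_iff_commute] at h

lemma commute_cc_bb : Commute (cc p t s) (bb p t s) := by
  have h := PresentedGroup.one_of_mem (rels := HRels p t s)
    (x := ⁅FreeGroup.of (2 : Fin 3), FreeGroup.of 1⁆) (by simp [HRels])
  rwa [map_commutatorElement, commutatorElement_eq_one_iff_commute] at h

lemma closure_aa_bb_cc : Subgroup.closure {aa p t s, bb p t s, cc p t s} = ⊤ := by
  rw [← PresentedGroup.closure_range_of]
  congr 1
  ext g
  simp [Fin.exists_fin_succ, aa, bb, cc, eq_comm]

lemma heisenberg_rels (ht : 1 ≤ t) (hs : 1 ≤ s) : ∀ r ∈ HRels p t s,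
    FreeGroup.lift ![(⟨1, 0, 0⟩ : Heisenberg (ZMod p)), ⟨0, 1, 0⟩, ⟨0, 0, 1⟩] r = 1 := by
  have hcast : ∀ {k : ℕ}, 1 ≤ k → ((p ^ k : ℕ) : ZMod p) = 0 := fun hk => by
    rw [Nat.cast_pow, ZMod.natCast_self, zero_pow (by omega)]
  simp only [HRels, Set.mem_insert_iff, Set.mem_singleton_iff]
  rintro r (rfl | rfl | rfl | rfl | rfl | rfl) <;>
    simp [Heisenberg.pow_eq, Heisenberg.commutatorElement_eq, Heisenberg.ext_iff, hcast ht, hcast hs]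

lemma not_commute_aa_bb (hp : p ≠ 1) (ht : 1 ≤ t) (hs : 1 ≤ s) :
    ¬ Commute (aa p t s) (bb p t s) := fun h => by
  have := ZMod.nontrivial_iff.mpr hp
  exact Heisenberg.not_commute
    (by simpa [aa, bb] using h.map (PresentedGroup.toGroup (heisenberg_rels ht hs)))

end Hgrp

theorem stmt7_general (p t s : ℕ) (hp : p.Prime) (hs : 1 ≤ s) (hts : s ≤ t) :
    (∀ M : Subgroup (Hgrp p t s), IsCoatom M → ∀ x ∈ M, ∀ y ∈ M, Commute x y) ∧
    (∃ x y : Hgrp p t s, ¬ Commute x y) ∧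
    (∀ K : Subgroup (Hgrp p t s), K ≠ ⊤ → ∀ x ∈ K, ∀ y ∈ K, Commute x y) := by
  have hproper (K : Subgroup (Hgrp p t s)) (hK : K ≠ ⊤) : ∀ x ∈ K, ∀ y ∈ K, Commute x y :=
    fun x hx y hy => by_contra fun hxy => hK <|
      Subgroup.eq_top_of_not_commute hp Hgrp.commutatorElement_aa_bb Hgrp.commute_cc_aa
        Hgrp.commute_cc_bb Hgrp.aa_pow Hgrp.bb_pow Hgrp.cc_pow Hgrp.closure_aa_bb_cc hx hy hxy
  exact ⟨fun M hM => hproper M hM.1,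
    ⟨aa p t s, bb p t s, Hgrp.not_commute_aa_bb hp.ne_one (hs.trans hts) hs⟩, hproper⟩

theorem stmt7 (p t s : ℕ) (hp : p.Prime) (hodd : Odd p) (hs : 1 ≤ s) (hts : s ≤ t) :
    (∀ M : Subgroup (Hgrp p t s), IsCoatom M → ∀ x ∈ M, ∀ y ∈ M, Commute x y) ∧
    (∃ x y : Hgrp p t s, ¬ Commute x y) ∧
    (∀ K : Subgroup (Hgrp p t s), K ≠ ⊤ → ∀ x ∈ K, ∀ y ∈ K, Commute x y) :=
  stmt7_general p t s hp hs hts
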